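/- arXiv:2311.11800 — 4 statements merged into one kernel-verified Lean document; each statement's English description precedes it below -/
import Mathlib

section
/- Let (X, Σ, μ) be a measure space and u ∈ L²(X, μ; 𝔽ⁿ). Then u is a continuous frame (i.e. there exist A, B > 0 with A‖v‖² ≤ ∫_X |⟨v, u_x⟩|² dμ(x) ≤ B‖v‖² for all v ∈ 𝔽ⁿ) if and only if the component functions u^1, …, u^n are linearly independent in L²(X, μ; 𝔽). -/
open MeasureTheory Function ComplexConjugate

/-! In `L²` the frame quantity `∫ ‖⟪v, u x⟫‖² dμ` equals `‖∑ₖ conj (v k) • uᵏ‖²`, the squared norm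
of the synthesis operator `c ↦ ∑ₖ c k • uᵏ` at the conjugate of `v`. On a finite-dimensional space
a linear map is always bounded, and it is bounded below (by compactness of the unit sphere) exactly
when it is injective; injectivity of the synthesis operator is linear independence of the `uᵏ`. -/

section SqNormBounds

variable {E : Type*} [NormedAddCommGroup E]

def HasSqNormBounds (q : E → ℝ) : Prop :=
  ∃ A B : ℝ, 0 < A ∧ 0 < B ∧ ∀ v, A * ‖v‖ ^ 2 ≤ q v ∧ q v ≤ B * ‖v‖ ^ 2

theorem hasSqNormBounds_comp_iff {q : E → ℝ} {σ : E → E} (hσ : Surjective σ)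
    (hσ_norm : ∀ v, ‖σ v‖ = ‖v‖) : HasSqNormBounds (q ∘ σ) ↔ HasSqNormBounds q := by
  refine exists₂_congr fun A B => and_congr_right' <| and_congr_right' ?_
  conv_rhs => rw [hσ.forall]
  simp only [comp_apply, hσ_norm]

variable {𝕜 F : Type*} [NontriviallyNormedField 𝕜] [CompleteSpace 𝕜] [NormedSpace 𝕜 E]
  [FiniteDimensional 𝕜 E] [NormedAddCommGroup F] [NormedSpace 𝕜 F]

theorem LinearMap.hasSqNormBounds_iff_injective (L : E →ₗ[𝕜] F) :
    HasSqNormBounds (fun v => ‖L v‖ ^ 2) ↔ Injective L := by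
  constructor
  · rintro ⟨A, B, hA, -, hAB⟩
    refine (injective_iff_map_eq_zero L).2 fun v hv => norm_eq_zero.1 ?_
    have hlower : A * ‖v‖ ^ 2 ≤ ‖L v‖ ^ 2 := (hAB v).1
    rw [hv, norm_zero, zero_pow two_ne_zero] at hlower
    exact pow_eq_zero_iff two_ne_zero |>.1 <|
      le_antisymm (nonpos_of_mul_nonpos_right hlower hA) (sq_nonneg _)
  · intro hL
    obtain ⟨c, hc, hlower⟩ := antilipschitzWith_iff_exists_mul_le_norm.1
      ((L.injective_iff_antilipschitz.1 hL).imp fun _ h => h.2)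
    obtain ⟨C, hC, hupper⟩ := (LinearMap.toContinuousLinearMap L).isBoundedLinearMap.bound
    refine ⟨c ^ 2, C ^ 2, by positivity, by positivity, fun v => ⟨?_, ?_⟩⟩
    · rw [← mul_pow]; exact pow_le_pow_left₀ (by positivity) (hlower v) 2
    · rw [← mul_pow]; exact pow_le_pow_left₀ (norm_nonneg _) (hupper v) 2

end SqNormBounds

theorem MeasureTheory.Lp.coeFn_finset_sum {X E ι : Type*} [MeasurableSpace X] {μ : Measure X}
    [NormedAddCommGroup E] {p : ENNReal} (s : Finset ι) (f : ι → Lp E p μ) :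
    ⇑(∑ i ∈ s, f i) =ᵐ[μ] ∑ i ∈ s, ⇑(f i) := by
  induction s using Finset.cons_induction with
  | empty => simpa using Lp.coeFn_zero E p μ
  | cons a s ha ih =>
    simp only [Finset.sum_cons]
    exact (Lp.coeFn_add _ _).trans ih.add_left

theorem MeasureTheory.L2.norm_sq_eq_integral_norm_sq {X 𝕜 : Type*} [MeasurableSpace X]
    {μ : Measure X} [RCLike 𝕜] (g : Lp 𝕜 2 μ) : ‖g‖ ^ 2 = ∫ x, ‖g x‖ ^ 2 ∂μ := by
  rw [@norm_sq_eq_re_inner 𝕜, L2.inner_def, ← integral_re (L2.integrable_inner g g)]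
  simp only [inner_self_eq_norm_sq]

section Synthesis

variable {𝕜 X ι : Type*} [RCLike 𝕜] [MeasurableSpace X] {μ : Measure X} [Fintype ι]
  {u : X → EuclideanSpace 𝕜 ι}

noncomputable def componentSynthesis (hu : ∀ k, MemLp (fun x => u x k) 2 μ) :
    EuclideanSpace 𝕜 ι →ₗ[𝕜] Lp 𝕜 2 μ :=
  Fintype.linearCombination 𝕜 (fun k => (hu k).toLp fun x => u x k) ∘ₗ
    (WithLp.linearEquiv 2 𝕜 (ι → 𝕜)).toLinearMap

theorem componentSynthesis_apply (hu : ∀ k, MemLp (fun x => u x k) 2 μ)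
    (w : EuclideanSpace 𝕜 ι) :
    componentSynthesis hu w = ∑ k, w k • (hu k).toLp fun x => u x k := by
  simp [componentSynthesis, Fintype.linearCombination_apply]

theorem injective_componentSynthesis_iff (hu : ∀ k, MemLp (fun x => u x k) 2 μ) :
    Injective (componentSynthesis hu) ↔
      LinearIndependent 𝕜 fun k => (hu k).toLp fun x => u x k := by
  rw [linearIndependent_iff_injective_fintypeLinearCombination, componentSynthesis,
    LinearMap.coe_comp, LinearEquiv.coe_coe,
    Injective.of_comp_iff' _ (WithLp.linearEquiv 2 𝕜 (ι → 𝕜)).bijective]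

noncomputable def euclideanConj (v : EuclideanSpace 𝕜 ι) : EuclideanSpace 𝕜 ι :=
  WithLp.toLp 2 fun k => conj (v k)

omit [Fintype ι] in
@[simp]
theorem euclideanConj_apply (v : EuclideanSpace 𝕜 ι) (k : ι) : euclideanConj v k = conj (v k) :=
  rfl

omit [Fintype ι] in
theorem euclideanConj_involutive : Involutive (euclideanConj (𝕜 := 𝕜) (ι := ι)) := fun v => by
  ext k; simp

theorem norm_euclideanConj (v : EuclideanSpace 𝕜 ι) : ‖euclideanConj v‖ = ‖v‖ := by
  simp [EuclideanSpace.norm_eq]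

theorem integral_norm_inner_sq_eq (hu : ∀ k, MemLp (fun x => u x k) 2 μ)
    (v : EuclideanSpace 𝕜 ι) :
    ∫ x, ‖(inner 𝕜 v (u x) : 𝕜)‖ ^ 2 ∂μ = ‖componentSynthesis hu (euclideanConj v)‖ ^ 2 := by
  rw [L2.norm_sq_eq_integral_norm_sq]
  refine integral_congr_ae ?_
  have hsmul : ∀ᵐ x ∂μ, ∀ k, (conj (v k) • (hu k).toLp fun x => u x k) x = conj (v k) * u x k :=
    ae_all_iff.2 fun k =>
      (Lp.coeFn_smul _ _).trans ((hu k).coeFn_toLp.mono fun x hx => by simp [hx])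
  filter_upwards [Lp.coeFn_finset_sum Finset.univ fun k => conj (v k) • (hu k).toLp fun x => u x k,
    hsmul] with x hsum hx
  rw [componentSynthesis_apply]
  simp only [euclideanConj_apply]
  rw [hsum, Finset.sum_apply]
  simp [hx, PiLp.inner_apply, mul_comm]

end Synthesis

theorem stmt7_general {𝕜 X : Type*} [RCLike 𝕜] [MeasurableSpace X] (μ : Measure X) {n : ℕ}
    (u : X → EuclideanSpace 𝕜 (Fin n))
    (hk : ∀ k : Fin n, MemLp (fun x => u x k) 2 μ) :
    (∃ A B : ℝ, 0 < A ∧ 0 < B ∧ ∀ v : EuclideanSpace 𝕜 (Fin n),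
        A * ‖v‖ ^ 2 ≤ ∫ x, ‖(inner 𝕜 v (u x) : 𝕜)‖ ^ 2 ∂μ ∧
        ∫ x, ‖(inner 𝕜 v (u x) : 𝕜)‖ ^ 2 ∂μ ≤ B * ‖v‖ ^ 2)
      ↔ LinearIndependent 𝕜 fun k : Fin n => (hk k).toLp fun x => u x k := by
  have hframe : (fun v => ∫ x, ‖(inner 𝕜 v (u x) : 𝕜)‖ ^ 2 ∂μ) =
      (fun w => ‖componentSynthesis hk w‖ ^ 2) ∘ euclideanConj :=
    funext (integral_norm_inner_sq_eq hk)
  change HasSqNormBounds _ ↔ _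
  rw [hframe, hasSqNormBounds_comp_iff euclideanConj_involutive.surjective norm_euclideanConj,
    LinearMap.hasSqNormBounds_iff_injective, injective_componentSynthesis_iff]

theorem stmt7 {𝕜 X : Type*} [RCLike 𝕜] [MeasurableSpace X] (μ : Measure X) {n : ℕ}
    (u : X → EuclideanSpace 𝕜 (Fin n)) (hu : MemLp u 2 μ)
    (hk : ∀ k : Fin n, MemLp (fun x => u x k) 2 μ) :
    (∃ A B : ℝ, 0 < A ∧ 0 < B ∧ ∀ v : EuclideanSpace 𝕜 (Fin n),
        A * ‖v‖ ^ 2 ≤ ∫ x, ‖(inner 𝕜 v (u x) : 𝕜)‖ ^ 2 ∂μ ∧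
        ∫ x, ‖(inner 𝕜 v (u x) : 𝕜)‖ ^ 2 ∂μ ≤ B * ‖v‖ ^ 2)
      ↔ LinearIndependent 𝕜 fun k : Fin n => (hk k).toLp fun x => u x k :=
  stmt7_general μ u hk
end

section
/- Let a, b ∈ ℝ with a − b ∉ ℤ. Then u = ((1/n)e^{2πi a n}, (1/n)e^{2πi b n})_{n∈ℕ*} is a classical frame in ℂ²: there exist A, B > 0 such that for all v ∈ ℂ², A‖v‖² ≤ Σ_{n≥1} |⟨v, u_n⟩|² ≤ B‖v‖². -/
/-!
With `u¹, u² ∈ ℓ²(ℕ*)` the two coordinate sequences, the frame sum of `v` is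
`‖conj v₀ • u¹ + conj v₁ • u²‖²`; expanding the square puts it between `(S ∓ |⟪u¹, u²⟫|) ‖v‖²`,
where `S = ‖u¹‖² = ‖u²‖² = ∑ 1/n²`. Both bounds are positive because
`⟪u¹, u²⟫ = ∑ zⁿ/n²` with `z = e^{2πi(b-a)} ≠ 1` has modulus strictly below `S`: already its first
two terms `z` and `z²/4` do not lie on a common ray.
-/

open Complex

section InnerProductSpace

variable {𝕜 E : Type*} [RCLike 𝕜] [NormedAddCommGroup E] [InnerProductSpace 𝕜 E]

theorem norm_smul_add_smul_sq (α β : 𝕜) (x y : E) :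
    ‖α • x + β • y‖ ^ 2 =
      ‖α‖ ^ 2 * ‖x‖ ^ 2 + 2 * RCLike.re (starRingEnd 𝕜 α * β * inner 𝕜 x y) +
        ‖β‖ ^ 2 * ‖y‖ ^ 2 := by
  rw [norm_add_sq (𝕜 := 𝕜), inner_smul_left, inner_smul_right, norm_smul, norm_smul, mul_pow,
    mul_pow, mul_assoc]

theorem two_mul_abs_re_conj_mul_mul_le (α β z : 𝕜) :
    2 * |RCLike.re (starRingEnd 𝕜 α * β * z)| ≤ (‖α‖ ^ 2 + ‖β‖ ^ 2) * ‖z‖ := by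
  have h := RCLike.abs_re_le_norm (starRingEnd 𝕜 α * β * z)
  rw [norm_mul, norm_mul, RCLike.norm_conj] at h
  nlinarith [sq_nonneg (‖α‖ - ‖β‖), norm_nonneg z]

theorem min_sub_norm_inner_mul_le_norm_smul_add_smul_sq (α β : 𝕜) (x y : E) :
    (min (‖x‖ ^ 2) (‖y‖ ^ 2) - ‖inner 𝕜 x y‖) * (‖α‖ ^ 2 + ‖β‖ ^ 2) ≤ ‖α • x + β • y‖ ^ 2 := by
  have hre := neg_abs_le (RCLike.re (starRingEnd 𝕜 α * β * inner 𝕜 x y))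
  have hx := min_le_left (‖x‖ ^ 2) (‖y‖ ^ 2)
  have hy := min_le_right (‖x‖ ^ 2) (‖y‖ ^ 2)
  rw [norm_smul_add_smul_sq]
  nlinarith [two_mul_abs_re_conj_mul_mul_le α β (inner 𝕜 x y), sq_nonneg ‖α‖, sq_nonneg ‖β‖]

theorem norm_smul_add_smul_sq_le_max_add_norm_inner_mul (α β : 𝕜) (x y : E) :
    ‖α • x + β • y‖ ^ 2 ≤ (max (‖x‖ ^ 2) (‖y‖ ^ 2) + ‖inner 𝕜 x y‖) * (‖α‖ ^ 2 + ‖β‖ ^ 2) := by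
  have hre := le_abs_self (RCLike.re (starRingEnd 𝕜 α * β * inner 𝕜 x y))
  have hx := le_max_left (‖x‖ ^ 2) (‖y‖ ^ 2)
  have hy := le_max_right (‖x‖ ^ 2) (‖y‖ ^ 2)
  rw [norm_smul_add_smul_sq]
  nlinarith [two_mul_abs_re_conj_mul_mul_le α β (inner 𝕜 x y), sq_nonneg ‖α‖, sq_nonneg ‖β‖]

end InnerProductSpace

theorem lp.tsum_norm_mul_conj_add_mul_conj_sq {ι 𝕜 : Type*} [RCLike 𝕜]
    (x y : lp (fun _ : ι => 𝕜) 2) (α β : 𝕜) :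
    ∑' n, ‖α * starRingEnd 𝕜 (x n) + β * starRingEnd 𝕜 (y n)‖ ^ 2 =
      ‖starRingEnd 𝕜 α • x + starRingEnd 𝕜 β • y‖ ^ 2 := by
  have h :=
    lp.norm_rpow_eq_tsum (p := 2) (by norm_num) (starRingEnd 𝕜 α • x + starRingEnd 𝕜 β • y)
  simp only [ENNReal.toReal_ofNat, Real.rpow_two] at h
  rw [h]
  congr 1 with n
  rw [← RCLike.norm_conj]
  simp only [map_add, map_mul, RCLike.conj_conj, lp.coeFn_add, lp.coeFn_smul, Pi.add_apply,
    Pi.smul_apply, smul_eq_mul]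

theorem norm_tsum_lt_tsum_norm_of_norm_add_lt {ι E : Type*} [NormedAddCommGroup E]
    [CompleteSpace E] {f : ι → E} (hf : Summable fun n => ‖f n‖) {i j : ι} (hij : i ≠ j)
    (h : ‖f i + f j‖ < ‖f i‖ + ‖f j‖) : ‖∑' n, f n‖ < ∑' n, ‖f n‖ := by
  classical
  rw [← hf.of_norm.sum_add_tsum_compl (s := {i, j}), ← hf.sum_add_tsum_compl (s := {i, j}),
    Finset.sum_pair hij, Finset.sum_pair hij]
  calc ‖f i + f j + ∑' n : ↑(↑({i, j} : Finset ι) : Set ι)ᶜ, f n‖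
      ≤ ‖f i + f j‖ + ‖∑' n : ↑(↑({i, j} : Finset ι) : Set ι)ᶜ, f n‖ := norm_add_le _ _
    _ < ‖f i‖ + ‖f j‖ + ∑' n : ↑(↑({i, j} : Finset ι) : Set ι)ᶜ, ‖f n‖ :=
      add_lt_add_of_lt_of_le h (norm_tsum_le_tsum_norm (hf.subtype _))

theorem Complex.norm_add_sq_div_four_lt {z : ℂ} (hz : ‖z‖ = 1) (hz1 : z ≠ 1) :
    ‖z + z ^ 2 / 4‖ < ‖z‖ + ‖z ^ 2 / 4‖ := by
  refine (norm_add_le _ _).lt_of_ne fun h => hz1 ?_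
  have hz0 : z ≠ 0 := by rintro rfl; simp at hz
  rw [norm_add_eq_iff_real] at h
  simp only [norm_div, norm_pow, hz, Complex.real_smul] at h
  norm_num at h
  have : z * z = z * 1 := by linear_combination -4 * h
  exact mul_left_cancel₀ hz0 this

theorem summable_one_div_pnat_sq : Summable fun n : ℕ+ => 1 / ((n : ℕ) : ℝ) ^ 2 :=
  (Real.summable_one_div_nat_pow.mpr one_lt_two).comp_injective PNat.coe_injective

theorem Complex.norm_tsum_pow_div_sq_lt {z : ℂ} (hz : ‖z‖ = 1) (hz1 : z ≠ 1) :
    ‖∑' n : ℕ+, z ^ (n : ℕ) / ((n : ℕ) : ℂ) ^ 2‖ < ∑' n : ℕ+, 1 / ((n : ℕ) : ℝ) ^ 2 := by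
  have hnorm (n : ℕ+) : ‖z ^ (n : ℕ) / ((n : ℕ) : ℂ) ^ 2‖ = 1 / ((n : ℕ) : ℝ) ^ 2 := by
    simp [hz]
  simp_rw [← hnorm]
  refine norm_tsum_lt_tsum_norm_of_norm_add_lt ?_ (show (1 : ℕ+) ≠ 2 by decide) ?_
  · simpa only [hnorm] using summable_one_div_pnat_sq
  · have := Complex.norm_add_sq_div_four_lt hz hz1
    norm_num [hz] at this ⊢
    exact this

theorem Complex.exp_two_pi_mul_I_mul_ne_one {x : ℝ} (hx : ∀ m : ℤ, x ≠ m) :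
    exp (2 * Real.pi * I * x) ≠ 1 := by
  rw [Ne, Complex.exp_eq_one_iff]
  rintro ⟨m, hm⟩
  have h2piI : 2 * (Real.pi : ℂ) * I ≠ 0 := by simp [Real.pi_ne_zero]
  exact hx m (by exact_mod_cast mul_left_cancel₀ h2piI (hm.trans (mul_comm _ _)))

noncomputable def harmonicExp (θ : ℝ) (n : ℕ+) : ℂ :=
  1 / ((n : ℕ) : ℂ) * exp (2 * Real.pi * I * θ * (n : ℕ))

theorem norm_harmonicExp (θ : ℝ) (n : ℕ+) : ‖harmonicExp θ n‖ = 1 / ((n : ℕ) : ℝ) := by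
  simp [harmonicExp, Complex.norm_exp]

theorem memℓp_harmonicExp (θ : ℝ) : Memℓp (harmonicExp θ) 2 := by
  refine (memℓp_gen_iff (by norm_num)).2 ?_
  simpa [norm_harmonicExp] using summable_one_div_pnat_sq

noncomputable def harmonicExpLp (θ : ℝ) : lp (fun _ : ℕ+ => ℂ) 2 :=
  ⟨harmonicExp θ, memℓp_harmonicExp θ⟩

theorem norm_harmonicExpLp_sq (θ : ℝ) :
    ‖harmonicExpLp θ‖ ^ 2 = ∑' n : ℕ+, 1 / ((n : ℕ) : ℝ) ^ 2 := by
  have h := lp.norm_rpow_eq_tsum (p := 2) (by norm_num) (harmonicExpLp θ)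
  simp only [ENNReal.toReal_ofNat, Real.rpow_two] at h
  rw [h]
  exact tsum_congr fun n => by
    rw [show harmonicExpLp θ n = harmonicExp θ n from rfl, norm_harmonicExp, div_pow, one_pow]

theorem inner_harmonicExpLp (a b : ℝ) :
    inner ℂ (harmonicExpLp a) (harmonicExpLp b) =
      ∑' n : ℕ+, exp (2 * Real.pi * I * ((b - a : ℝ) : ℂ)) ^ (n : ℕ) / ((n : ℕ) : ℂ) ^ 2 := by
  rw [lp.inner_eq_tsum]
  refine tsum_congr fun n => ?_
  change harmonicExp b n * starRingEnd ℂ (harmonicExp a n) = _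
  simp only [harmonicExp, map_mul, map_div₀, map_one, map_natCast, map_ofNat, ← Complex.exp_conj,
    Complex.conj_ofReal, Complex.conj_I, ← Complex.exp_nat_mul]
  rw [mul_mul_mul_comm, ← Complex.exp_add]
  push_cast
  ring_nf

theorem stmt13 (a b : ℝ) (h : ∀ m : ℤ, a - b ≠ (m : ℝ)) :
    ∃ A B : ℝ, 0 < A ∧ 0 < B ∧ ∀ v : Fin 2 → ℂ,
      A * (‖v 0‖ ^ 2 + ‖v 1‖ ^ 2) ≤
        (∑' n : ℕ+,
          ‖v 0 * (starRingEnd ℂ) ((1 / ((n : ℕ) : ℂ)) * Complex.exp (2 * Real.pi * Complex.I * a * (n : ℕ)))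
            + v 1 * (starRingEnd ℂ) ((1 / ((n : ℕ) : ℂ)) * Complex.exp (2 * Real.pi * Complex.I * b * (n : ℕ)))‖ ^ 2) ∧
      (∑' n : ℕ+,
          ‖v 0 * (starRingEnd ℂ) ((1 / ((n : ℕ) : ℂ)) * Complex.exp (2 * Real.pi * Complex.I * a * (n : ℕ)))
            + v 1 * (starRingEnd ℂ) ((1 / ((n : ℕ) : ℂ)) * Complex.exp (2 * Real.pi * Complex.I * b * (n : ℕ)))‖ ^ 2)
        ≤ B * (‖v 0‖ ^ 2 + ‖v 1‖ ^ 2) := by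
  set x := harmonicExpLp a
  set y := harmonicExpLp b
  set S : ℝ := ∑' n : ℕ+, 1 / ((n : ℕ) : ℝ) ^ 2
  have hT : ‖inner ℂ x y‖ < S := by
    rw [inner_harmonicExpLp]
    refine norm_tsum_pow_div_sq_lt (by simp [norm_exp])
      (exp_two_pi_mul_I_mul_ne_one fun m hm => h (-m) ?_)
    push_cast
    linarith
  refine ⟨S - ‖inner ℂ x y‖, S + ‖inner ℂ x y‖, by linarith,
    by linarith [norm_nonneg (inner ℂ x y)], fun v => ?_⟩
  have hlow := min_sub_norm_inner_mul_le_norm_smul_add_smul_sq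
    (starRingEnd ℂ (v 0)) (starRingEnd ℂ (v 1)) x y
  have hup := norm_smul_add_smul_sq_le_max_add_norm_inner_mul
    (starRingEnd ℂ (v 0)) (starRingEnd ℂ (v 1)) x y
  rw [← lp.tsum_norm_mul_conj_add_mul_conj_sq] at hlow hup
  simp only [RCLike.norm_conj, x, y, norm_harmonicExpLp_sq, min_self, max_self] at hlow hup
  exact ⟨hlow, hup⟩
end

section
/- Let (X, Σ, μ) be a measure space. The set of continuous frames ℱ = {u ∈ L²(X, μ; 𝔽ⁿ) : ∃ A, B > 0, ∀v ∈ 𝔽ⁿ, A‖v‖² ≤ ∫_X |⟨v,u_x⟩|² dμ ≤ B‖v‖²} is open in L²(X, μ; 𝔽ⁿ). -/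
/-!
For `v ∈ E` let `T_v u := ⟪v, u(·)⟫ ∈ L²(X, μ; 𝕜)`, a continuous linear map of `u` with
`‖T_v‖ ≤ ‖v‖`. The upper frame bound holds for every `u` by Cauchy–Schwarz, and the lower one
says `c ‖v‖ ≤ ‖T_v u‖` for some `c > 0`. Since `‖T_v u - T_v u'‖ ≤ ‖v‖ ‖u - u'‖`, such a bound
survives, with a smaller constant, a perturbation of `u` of norm less than `c`.
-/

open MeasureTheory
open scoped NNReal

theorem MeasureTheory.Lp.integral_norm_sq_eq_norm_sq {E X : Type*} [NormedAddCommGroup E]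
    [MeasurableSpace X] {μ : Measure X} (f : Lp E 2 μ) : ∫ x, ‖f x‖ ^ 2 ∂μ = ‖f‖ ^ 2 := by
  have hI : 0 ≤ ∫ x, ‖f x‖ ^ 2 ∂μ := integral_nonneg fun x => sq_nonneg _
  rw [Lp.norm_def, (Lp.memLp f).eLpNorm_eq_integral_rpow_norm two_ne_zero ENNReal.ofNat_ne_top]
  simp only [ENNReal.toReal_ofNat, Real.rpow_two]
  rw [ENNReal.toReal_ofReal (by positivity)]
  exact_mod_cast (Real.rpow_inv_natCast_pow hI two_ne_zero).symm

section BoundedBelow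

variable {𝕜 E F G : Type*} [NontriviallyNormedField 𝕜] [Norm E] [SeminormedAddCommGroup F]
  [NormedSpace 𝕜 F] [SeminormedAddCommGroup G] [NormedSpace 𝕜 G]

theorem isOpen_setOf_exists_pos_mul_norm_le_norm_apply {T : E → F →L[𝕜] G} {C : ℝ≥0}
    (hT : ∀ v, ‖T v‖ ≤ C * ‖v‖) : IsOpen {u : F | ∃ c > 0, ∀ v, c * ‖v‖ ≤ ‖T v u‖} := by
  rw [Metric.isOpen_iff]
  rintro u ⟨c, hc, hcu⟩
  refine ⟨c / (C + 1), by positivity, fun u' hu' => ⟨c - C * ‖u' - u‖, ?_, fun v => ?_⟩⟩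
  · rw [Metric.mem_ball, dist_eq_norm, lt_div_iff₀ (by positivity)] at hu'
    nlinarith [norm_nonneg (u' - u)]
  · have hdiff : ‖T v (u' - u)‖ ≤ C * ‖v‖ * ‖u' - u‖ :=
      ((T v).le_opNorm _).trans (by gcongr; exact hT v)
    have htri : ‖T v u‖ ≤ ‖T v u'‖ + ‖T v (u' - u)‖ := by
      simpa using norm_sub_le (T v u') (T v (u' - u))
    nlinarith [hcu v]

end BoundedBelow

section InnerCoefficients

variable {𝕜 E X : Type*} [RCLike 𝕜] [NormedAddCommGroup E] [InnerProductSpace 𝕜 E]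
  [MeasurableSpace X] {μ : Measure X}

theorem integral_norm_inner_sq_eq_norm_compLpL_sq (v : E) (u : Lp E 2 μ) :
    ∫ x, ‖(inner 𝕜 v (u x) : 𝕜)‖ ^ 2 ∂μ = ‖(innerSL 𝕜 v).compLpL 2 μ u‖ ^ 2 := by
  rw [← Lp.integral_norm_sq_eq_norm_sq]
  refine integral_congr_ae ?_
  filter_upwards [(innerSL 𝕜 v).coeFn_compLpL u] with x hx
  rw [hx, innerSL_apply_apply]

theorem norm_innerSL_compLpL_le (v : E) : ‖(innerSL 𝕜 v).compLpL 2 μ‖ ≤ ‖v‖ :=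
  (ContinuousLinearMap.norm_compLpL_le _).trans (innerSL_apply_norm 𝕜 v).le

theorem exists_frame_bounds_iff (u : Lp E 2 μ) :
    (∃ A B : ℝ, 0 < A ∧ 0 < B ∧ ∀ v : E,
        A * ‖v‖ ^ 2 ≤ ∫ x, ‖(inner 𝕜 v (u x) : 𝕜)‖ ^ 2 ∂μ ∧
        ∫ x, ‖(inner 𝕜 v (u x) : 𝕜)‖ ^ 2 ∂μ ≤ B * ‖v‖ ^ 2) ↔
      ∃ c > 0, ∀ v : E, c * ‖v‖ ≤ ‖(innerSL 𝕜 v).compLpL 2 μ u‖ := by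
  simp only [integral_norm_inner_sq_eq_norm_compLpL_sq]
  set T := fun v : E => (innerSL 𝕜 v).compLpL 2 μ
  constructor
  · rintro ⟨A, _, hA, -, hAB⟩
    refine ⟨√A, Real.sqrt_pos.2 hA, fun v => ?_⟩
    calc √A * ‖v‖ = √(A * ‖v‖ ^ 2) := by rw [Real.sqrt_mul hA.le, Real.sqrt_sq (norm_nonneg v)]
      _ ≤ √(‖T v u‖ ^ 2) := Real.sqrt_le_sqrt (hAB v).1
      _ = ‖T v u‖ := Real.sqrt_sq (norm_nonneg _)
  · rintro ⟨c, hc, hcu⟩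
    refine ⟨c ^ 2, ‖u‖ ^ 2 + 1, by positivity, by positivity, fun v => ⟨?_, ?_⟩⟩
    · rw [← mul_pow]
      exact pow_le_pow_left₀ (by positivity) (hcu v) 2
    · have hbessel : ‖T v u‖ ≤ ‖v‖ * ‖u‖ :=
        ((T v).le_opNorm u).trans (by gcongr; exact norm_innerSL_compLpL_le v)
      nlinarith [norm_nonneg (T v u), norm_nonneg v, norm_nonneg u]

end InnerCoefficients

theorem stmt14 {𝕜 X : Type*} [RCLike 𝕜] [MeasurableSpace X] (μ : Measure X) (n : ℕ) :
    IsOpen {u : Lp (EuclideanSpace 𝕜 (Fin n)) 2 μ |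
      ∃ A B : ℝ, 0 < A ∧ 0 < B ∧ ∀ v : EuclideanSpace 𝕜 (Fin n),
        A * ‖v‖ ^ 2 ≤ ∫ x, ‖(inner 𝕜 v (u x) : 𝕜)‖ ^ 2 ∂μ ∧
        ∫ x, ‖(inner 𝕜 v (u x) : 𝕜)‖ ^ 2 ∂μ ≤ B * ‖v‖ ^ 2} := by
  simp_rw [exists_frame_bounds_iff]
  exact isOpen_setOf_exists_pos_mul_norm_le_norm_apply (C := 1) fun v => by
    simpa using norm_innerSL_compLpL_le (μ := μ) v
end

section
/- Let (X, Σ, μ) be a measure space with dim L²(X, μ; 𝔽) ≥ n. Then the set of continuous frames in L²(X, μ; 𝔽ⁿ) is nonempty and dense in L²(X, μ; 𝔽ⁿ). -/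
/-!
A family `u ∈ L²(X; 𝔽ⁿ)` is a frame as soon as its components are linearly independent in
`L²(X; 𝔽)`: then `c ↦ ∑ cᵢ uⁱ` is injective on the finite-dimensional space `𝔽ⁿ`, hence bounded
above and below, and `∫ |⟪v, u x⟫|² dμ = ‖∑ conj(vᵢ) uⁱ‖²`.

Independent `n`-tuples in a Hilbert space are dense once one of them, `a`, exists: the Gram
determinant of `f + t (a - f)` is a polynomial in the real parameter `t` which does not vanish at
`t = 1`, so it has finitely many zeros and `f` is a limit of independent tuples. The component map
`L²(X; 𝔽ⁿ) → L²(X; 𝔽)ⁿ` is surjective, hence open, so the preimage of this dense set is dense.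
-/

open MeasureTheory Filter Topology Polynomial
open scoped ENNReal ComplexConjugate

section Frames

variable {𝕜 X : Type*} [RCLike 𝕜] [MeasurableSpace X]

theorem LinearMap.exists_norm_bounds_of_injective {E F : Type*} [NormedAddCommGroup E]
    [NormedSpace 𝕜 E] [FiniteDimensional 𝕜 E] [NormedAddCommGroup F] [NormedSpace 𝕜 F]
    (f : E →ₗ[𝕜] F) (hf : Function.Injective f) :
    ∃ A B : ℝ, 0 < A ∧ 0 < B ∧ ∀ x, A * ‖x‖ ≤ ‖f x‖ ∧ ‖f x‖ ≤ B * ‖x‖ := by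
  obtain ⟨K, hK, hanti⟩ := f.injective_iff_antilipschitz.1 hf
  refine ⟨(K : ℝ)⁻¹, ‖LinearMap.toContinuousLinearMap f‖ + 1, by positivity, by positivity,
    fun x => ⟨?_, ?_⟩⟩
  · rw [inv_mul_le_iff₀ (by positivity)]
    exact hanti.le_mul_norm (map_zero f) x
  · calc ‖f x‖ ≤ ‖LinearMap.toContinuousLinearMap f‖ * ‖x‖ :=
          (LinearMap.toContinuousLinearMap f).le_opNorm x
      _ ≤ _ := by gcongr; linarith

section Gram

variable {ι H : Type*} [Fintype ι] [NormedAddCommGroup H] [InnerProductSpace 𝕜 H]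

local notation "⟪" x ", " y "⟫" => @inner 𝕜 _ _ x y

theorem finite_setOf_not_linearIndependent_add_smul {f d : ι → H}
    (hfd : LinearIndependent 𝕜 (f + d)) :
    {t : ℝ | ¬ LinearIndependent 𝕜 (f + (t : 𝕜) • d)}.Finite := by
  classical
  -- the entries of the Gram matrix of `f + t • d`, as polynomials in `t` (real, so `conj t = t`)
  let P : Matrix ι ι 𝕜[X] := Matrix.of fun i j =>
    C ⟪f i, f j⟫ + C (⟪f i, d j⟫ + ⟪d i, f j⟫) * X + C ⟪d i, d j⟫ * X ^ 2
  have hP : ∀ t : ℝ, P.det.eval (t : 𝕜) = (Matrix.gram 𝕜 (f + (t : 𝕜) • d)).det := by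
    intro t
    rw [← coe_evalRingHom, RingHom.map_det]
    congr 1
    ext i j
    simp only [P, RingHom.mapMatrix_apply, Matrix.map_apply, Matrix.of_apply, Matrix.gram_apply,
      coe_evalRingHom, eval_add, eval_mul, eval_C, eval_X, eval_pow, Pi.add_apply,
      Pi.smul_apply, inner_add_left, inner_add_right, inner_smul_left, inner_smul_right,
      RCLike.conj_ofReal]
    ring
  have hP0 : P.det ≠ 0 := by
    intro h
    have h1 := hP 1
    rw [h, eval_zero, RCLike.ofReal_one, one_smul] at h1
    exact Matrix.det_gram_ne_zero_iff_linearIndependent.2 hfd h1.symm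
  refine ((P.det.finite_setOfPred_isRoot hP0).preimage RCLike.ofReal_injective.injOn).subset
    fun t ht => ?_
  rw [Set.mem_ofPred_eq, ← Matrix.det_gram_ne_zero_iff_linearIndependent, not_not, ← hP] at ht
  exact ht

theorem dense_setOf_linearIndependent {a : ι → H} (ha : LinearIndependent 𝕜 a) :
    Dense {f : ι → H | LinearIndependent 𝕜 f} := by
  intro f
  have hfin := finite_setOf_not_linearIndependent_add_smul (f := f) (d := a - f)
    (by rwa [add_sub_cancel])
  have hev : ∀ᶠ t : ℝ in 𝓝[≠] 0, LinearIndependent 𝕜 (f + (t : 𝕜) • (a - f)) :=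
    nhdsNE_le_cofinite 0 (eventually_cofinite.2 hfin)
  have htend : Tendsto (fun t : ℝ => f + (t : 𝕜) • (a - f)) (𝓝[≠] 0) (𝓝 f) := by
    have hcont : Continuous fun t : ℝ => f + (t : 𝕜) • (a - f) := by fun_prop
    simpa using (hcont.tendsto 0).mono_left nhdsWithin_le_nhds
  exact mem_closure_of_tendsto htend hev

end Gram

variable (𝕜) in
def IsContinuousFrame {E : Type*} [NormedAddCommGroup E] [InnerProductSpace 𝕜 E]
    {μ : Measure X} (u : Lp E 2 μ) : Prop :=
  ∃ A B : ℝ, 0 < A ∧ 0 < B ∧ ∀ v : E,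
    A * ‖v‖ ^ 2 ≤ ∫ x, ‖(inner 𝕜 v (u x) : 𝕜)‖ ^ 2 ∂μ ∧
    ∫ x, ‖(inner 𝕜 v (u x) : 𝕜)‖ ^ 2 ∂μ ≤ B * ‖v‖ ^ 2

theorem MeasureTheory.L2.integral_norm_sq_eq {μ : Measure X} (f : Lp 𝕜 2 μ) :
    ∫ x, ‖f x‖ ^ 2 ∂μ = ‖f‖ ^ 2 :=
  calc ∫ x, ‖f x‖ ^ 2 ∂μ = ∫ x, RCLike.re (inner 𝕜 (f x) (f x)) ∂μ := by
        simp only [inner_self_eq_norm_sq]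
    _ = RCLike.re (inner 𝕜 f f) := by rw [L2.inner_def, integral_re (L2.integrable_inner f f)]
    _ = ‖f‖ ^ 2 := inner_self_eq_norm_sq f

theorem integral_norm_inner_sq_eq_norm_innerSL_compLp {E : Type*} [NormedAddCommGroup E]
    [InnerProductSpace 𝕜 E] {μ : Measure X} (u : Lp E 2 μ) (v : E) :
    ∫ x, ‖(inner 𝕜 v (u x) : 𝕜)‖ ^ 2 ∂μ = ‖(innerSL 𝕜 v).compLp u‖ ^ 2 := by
  rw [← L2.integral_norm_sq_eq]
  refine integral_congr_ae ?_
  filter_upwards [(innerSL 𝕜 v).coeFn_compLp u] with x hx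
  rw [hx, innerSL_apply_apply]

namespace MeasureTheory.Lp

variable {ι : Type*} [Fintype ι] {p : ℝ≥0∞} [Fact (1 ≤ p)] {μ : Measure X}

variable (𝕜 ι p μ) in
noncomputable def componentsL : Lp (EuclideanSpace 𝕜 ι) p μ →L[𝕜] (ι → Lp 𝕜 p μ) :=
  ContinuousLinearMap.pi fun i => (EuclideanSpace.proj i).compLpL p μ

theorem componentsL_apply_ae (u : Lp (EuclideanSpace 𝕜 ι) p μ) (i : ι) :
    componentsL 𝕜 ι p μ u i =ᵐ[μ] fun x => u x i :=
  (EuclideanSpace.proj (𝕜 := 𝕜) i).coeFn_compLpL (p := p) (μ := μ) u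

theorem componentsL_compLp_single [DecidableEq ι] (i : ι) (h : Lp 𝕜 p μ) :
    componentsL 𝕜 ι p μ
      (((ContinuousLinearMap.id 𝕜 𝕜).smulRight (EuclideanSpace.single i (1 : 𝕜))).compLp h) =
      Pi.single (M := fun _ => Lp 𝕜 p μ) i h := by
  funext j
  apply Lp.ext
  filter_upwards [componentsL_apply_ae (((ContinuousLinearMap.id 𝕜 𝕜).smulRight
      (EuclideanSpace.single i (1 : 𝕜))).compLp h) j,
    ContinuousLinearMap.coeFn_compLp' ((ContinuousLinearMap.id 𝕜 𝕜).smulRight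
      (EuclideanSpace.single i (1 : 𝕜))) h,
    Lp.coeFn_zero 𝕜 p μ] with x hj hsingle hzero
  rw [hj, hsingle]
  rcases eq_or_ne j i with rfl | hji
  · simp
  · rw [Pi.single_eq_of_ne hji, hzero]
    simp [hji]

theorem componentsL_surjective : Function.Surjective (componentsL 𝕜 ι p μ) := by
  classical
  intro c
  refine ⟨∑ i, ((ContinuousLinearMap.id 𝕜 𝕜).smulRight
    (EuclideanSpace.single i (1 : 𝕜))).compLp (c i), ?_⟩
  simp only [map_sum, componentsL_compLp_single, Finset.univ_sum_single]

theorem innerSL_compLp_eq_sum (u : Lp (EuclideanSpace 𝕜 ι) p μ) (v : EuclideanSpace 𝕜 ι) :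
    (innerSL 𝕜 v).compLp u = ∑ i, conj (v i) • componentsL 𝕜 ι p μ u i := by
  have hv : innerSL 𝕜 v = ∑ i, conj (v i) • EuclideanSpace.proj i := by
    ext w
    simp [PiLp.inner_apply, mul_comm]
  have hlin := congrArg (fun L => L u) (map_sum (ContinuousLinearMap.compLpL₂ p μ
    (ContinuousLinearMap.id 𝕜 (EuclideanSpace 𝕜 ι →L[𝕜] 𝕜)))
    (fun i => conj (v i) • EuclideanSpace.proj i) Finset.univ)
  simp only [map_smul, _root_.sum_apply, _root_.smul_apply,
    ContinuousLinearMap.compLpL₂_apply_apply, ContinuousLinearMap.id_apply] at hlin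
  rw [hv, hlin]
  rfl

end MeasureTheory.Lp

theorem isContinuousFrame_of_linearIndependent {ι : Type*} [Fintype ι] {μ : Measure X}
    (u : Lp (EuclideanSpace 𝕜 ι) 2 μ) (hu : LinearIndependent 𝕜 (Lp.componentsL 𝕜 ι 2 μ u)) :
    IsContinuousFrame 𝕜 u := by
  obtain ⟨A, B, hA, hB, hAB⟩ := ((Fintype.linearCombination 𝕜 (Lp.componentsL 𝕜 ι 2 μ u)).comp
    (EuclideanSpace.equiv ι 𝕜).toLinearMap).exists_norm_bounds_of_injective
    ((linearIndependent_iff_injective_fintypeLinearCombination.1 hu).comp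
      (EuclideanSpace.equiv ι 𝕜).injective)
  refine ⟨A ^ 2, B ^ 2, by positivity, by positivity, fun v => ?_⟩
  set c : EuclideanSpace 𝕜 ι := WithLp.toLp 2 fun i => conj (v i)
  have hc : ‖c‖ = ‖v‖ := by simp [c, EuclideanSpace.norm_eq]
  have hS : ∫ x, ‖(inner 𝕜 v (u x) : 𝕜)‖ ^ 2 ∂μ =
      ‖∑ i, c i • Lp.componentsL 𝕜 ι 2 μ u i‖ ^ 2 := by
    rw [integral_norm_inner_sq_eq_norm_innerSL_compLp, Lp.innerSL_compLp_eq_sum]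
  rw [hS, ← hc, ← mul_pow, ← mul_pow]
  exact ⟨pow_le_pow_left₀ (by positivity) (hAB c).1 2,
    pow_le_pow_left₀ (norm_nonneg _) (hAB c).2 2⟩

end Frames

theorem stmt15 {𝕜 X : Type*} [RCLike 𝕜] [MeasurableSpace X] (μ : Measure X) (n : ℕ)
    (hdim : (n : Cardinal) ≤ Module.rank 𝕜 (Lp 𝕜 2 μ)) :
    ({u : Lp (EuclideanSpace 𝕜 (Fin n)) 2 μ |
      ∃ A B : ℝ, 0 < A ∧ 0 < B ∧ ∀ v : EuclideanSpace 𝕜 (Fin n),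
        A * ‖v‖ ^ 2 ≤ ∫ x, ‖(inner 𝕜 v (u x) : 𝕜)‖ ^ 2 ∂μ ∧
        ∫ x, ‖(inner 𝕜 v (u x) : 𝕜)‖ ^ 2 ∂μ ≤ B * ‖v‖ ^ 2}).Nonempty ∧
    Dense {u : Lp (EuclideanSpace 𝕜 (Fin n)) 2 μ |
      ∃ A B : ℝ, 0 < A ∧ 0 < B ∧ ∀ v : EuclideanSpace 𝕜 (Fin n),
        A * ‖v‖ ^ 2 ≤ ∫ x, ‖(inner 𝕜 v (u x) : 𝕜)‖ ^ 2 ∂μ ∧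
        ∫ x, ‖(inner 𝕜 v (u x) : 𝕜)‖ ^ 2 ∂μ ≤ B * ‖v‖ ^ 2} := by
  obtain ⟨a, ha⟩ := exists_linearIndependent_of_le_rank hdim
  have hdense : Dense {u : Lp (EuclideanSpace 𝕜 (Fin n)) 2 μ | IsContinuousFrame 𝕜 u} :=
    ((dense_setOf_linearIndependent ha).preimage
      ((Lp.componentsL 𝕜 (Fin n) 2 μ).isOpenMap Lp.componentsL_surjective)).mono
      fun u hu => isContinuousFrame_of_linearIndependent u hu
  exact ⟨hdense.nonempty, hdense⟩
end
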